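/- arXiv:2512.16414 — 5 statements merged into one kernel-verified Lean document; each statement's English description precedes it below -/
import Mathlib

section
/- For every preference profile P with margin graph M(P) and every descending linear ordering o ∈ O↓ of the edges of M(P), the River diagram M^RV(o) is a rooted tree, and its unique root is the unique River winner RV(o,P). -/
attribute [local instance] Classical.propDecidable

/-- A preference profile: each of `m` voters has a strict linear (total) preference
relation over the alternatives `A`. -/
structure Profile (A : Type*) (m : ℕ) where
  pref : Fin m → A → A → Prop
  strict : ∀ i, IsStrictTotalOrder A (pref i)

/-- The majority margin of `x` over `y`: the number of voters preferring `x` to `y`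
minus the number of voters preferring `y` to `x`. -/
noncomputable def margin {A : Type*} [Fintype A] {m : ℕ} (P : Profile A m) (x y : A) : ℤ :=
  ((Finset.univ.filter fun i => P.pref i x y).card : ℤ) -
    ((Finset.univ.filter fun i => P.pref i y x).card : ℤ)

/-- The majority margin as a function on (potential) edges. -/
noncomputable def marginE {A : Type*} [Fintype A] {m : ℕ} (P : Profile A m) : A × A → ℤ :=
  fun e => margin P e.1 e.2

/-- The edge set of the margin graph: an edge `(x, y)` between distinct alternatives
whenever the majority margin of `x` over `y` is nonnegative. -/
noncomputable def marginEdges {A : Type*} [Fintype A] {m : ℕ} (P : Profile A m) :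
    Finset (A × A) :=
  Finset.univ.filter fun e => e.1 ≠ e.2 ∧ 0 ≤ margin P e.1 e.2

/-- `l` is a path from `x` to `y` in the digraph with edge set `E`:
a nonempty list of pairwise distinct vertices starting at `x`, ending at `y`,
whose consecutive vertices are joined by edges of `E`. -/
def IsPathFrom {V : Type*} (E : Finset (V × V)) (l : List V) (x y : V) : Prop :=
  l ≠ [] ∧ l.Nodup ∧ l.head? = some x ∧ l.getLast? = some y ∧
    l.Chain' fun a b => (a, b) ∈ E

/-- There is a path from `x` to `y` in the digraph with edge set `E`. -/
def Reach {V : Type*} (E : Finset (V × V)) (x y : V) : Prop :=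
  ∃ l, IsPathFrom E l x y

/-- The digraph with edge set `E` contains a directed cycle. -/
def HasCycle {V : Type*} (E : Finset (V × V)) : Prop :=
  ∃ f ∈ E, Reach E f.2 f.1

/-- `T` is a tree rooted at `r`: there is a unique path from `r` to every vertex,
no edge enters the root, and every vertex has at most one incoming edge. -/
def IsRootedTree {V : Type*} (T : Finset (V × V)) (r : V) : Prop :=
  (∀ v : V, ∃! l : List V, IsPathFrom T l r v) ∧ (∀ e ∈ T, e.2 ≠ r) ∧
    ∀ e f, e ∈ T → f ∈ T → e.2 = f.2 → e = f

/-- `a` has no incoming edge in `D`. -/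
def noIncoming {V : Type*} (D : Finset (V × V)) (a : V) : Prop :=
  ∀ e ∈ D, e.2 ≠ a

/-- `o` is a descending linear ordering of the edge set `E` with respect to the
margin function `marg`: an enumeration of `E` without repetition in which edges of
larger margin come before edges of smaller margin. -/
def IsDescOrdering {V : Type*} (marg : V × V → ℤ) (E : Finset (V × V))
    (o : List (V × V)) : Prop :=
  o.Nodup ∧ (∀ e, e ∈ o ↔ e ∈ E) ∧ o.Pairwise fun e f => marg f ≤ marg e

/-- One step of the River procedure: add `e = (x, y)` to the current diagram `D` unless
(R1) `y` already has an incoming edge in `D`, or (R2) there is a path from `y` to `x`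
in `D`. -/
noncomputable def riverStep {V : Type*} (D : Finset (V × V)) (e : V × V) :
    Finset (V × V) :=
  if (∃ f ∈ D, f.2 = e.2) ∨ Reach D e.2 e.1 then D else insert e D

/-- The River diagram obtained by processing the edges in the order `o`,
starting from the empty diagram. -/
noncomputable def riverFold {V : Type*} (o : List (V × V)) : Finset (V × V) :=
  o.foldl riverStep ∅

/-- One step of the semi-River process with margin function `marg`: add `e = (x, y)` to
the current diagram `D` unless
(sR1) there is another incoming edge `e' = (z, y)` of `y` among the included edges of
margin strictly greater than `marg e` such that there is no path from `y` to `z` among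
the included edges of margin at least `marg e'`, or
(sR2) within the included edges of strictly greater margin, the set of vertices having
a path to `x` avoiding all incoming edges of `y` induces an acyclic subgraph in which
`y` is the only vertex with no incoming edge. -/
noncomputable def semiRiverStep {V : Type*} (marg : V × V → ℤ) (D : Finset (V × V))
    (e : V × V) : Finset (V × V) :=
  let Sgt := D.filter fun f => marg e < marg f
  let sR1 : Prop := ∃ f ∈ Sgt, f.2 = e.2 ∧
      ¬ Reach (D.filter fun g => marg f ≤ marg g) e.2 f.1
  let Anc : Set V := {v | Reach (Sgt.filter fun g => g.2 ≠ e.2) v e.1}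
  let ind := Sgt.filter fun g => g.1 ∈ Anc ∧ g.2 ∈ Anc
  let sR2 : Prop := e.2 ∈ Anc ∧ ¬ HasCycle ind ∧
      ∀ v ∈ Anc, ((∀ g ∈ ind, g.2 ≠ v) ↔ v = e.2)
  if sR1 ∨ sR2 then D else insert e D

/-- The semi-River diagram obtained by processing the edges in the order `o`,
starting from the empty diagram. -/
noncomputable def semiRiverFold {V : Type*} (marg : V × V → ℤ) (o : List (V × V)) :
    Finset (V × V) :=
  o.foldl (semiRiverStep marg) ∅

/-- The runs of the directed Prim algorithm on the digraph with edge set `E`, weight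
function `w`, and start vertex `s`: `PrimRun E w s S T` holds if after some number of
steps the set of explored vertices is `S` and the collected tree edges are `T`; at each
step an arbitrary crossing edge of maximum weight is selected. -/
inductive PrimRun {V : Type*} {β : Type*} [LinearOrder β] (E : Finset (V × V))
    (w : V × V → β) (s : V) : Finset V → Finset (V × V) → Prop
  | init : PrimRun E w s {s} ∅
  | step {S : Finset V} {T : Finset (V × V)} (e : V × V) (he : e ∈ E)
      (h1 : e.1 ∈ S) (h2 : e.2 ∉ S)
      (hmax : ∀ f ∈ E, f.1 ∈ S → f.2 ∉ S → w f ≤ w e)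
      (hrun : PrimRun E w s S T) :
      PrimRun E w s (insert e.2 S) (insert e T)

/-- `T` is a possible output of the directed Prim algorithm on `(E, w)` started at `s`:
it is obtained by a run that has terminated, i.e. no crossing edge remains. -/
def IsPrimOutput {V : Type*} {β : Type*} [LinearOrder β] (E : Finset (V × V))
    (w : V × V → β) (s : V) (T : Finset (V × V)) : Prop :=
  ∃ S : Finset V, PrimRun E w s S T ∧ ∀ f ∈ E, f.1 ∈ S → f.2 ∈ S

/-- The strength of a path (as a list of vertices): the minimum weight of its edges,
`⊤` for a trivial path with no edges. -/
noncomputable def strength {V : Type*} (w : V × V → ℕ) (l : List V) : ℕ∞ :=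
  ((l.zip l.tail).map fun p => (w p : ℕ∞)).foldr min ⊤

/-- `l` is a strongest path from `x` to `y`: it is a path from `x` to `y` and no path
from `x` to `y` has (strictly) greater strength. -/
def IsStrongestPath {V : Type*} (E : Finset (V × V)) (w : V × V → ℕ) (l : List V)
    (x y : V) : Prop :=
  IsPathFrom E l x y ∧ ∀ l', IsPathFrom E l' x y → strength w l' ≤ strength w l

/-- `o` is a descending linear ordering of `E` in which, among edges of equal margin,
edges belonging to `E'` come before edges not belonging to `E'`. -/
def IsSetOrdering {V : Type*} (marg : V × V → ℤ) (E E' : Finset (V × V))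
    (o : List (V × V)) : Prop :=
  o.Nodup ∧ (∀ e, e ∈ o ↔ e ∈ E) ∧
    o.Pairwise fun e f => marg f ≤ marg e ∧ (marg e = marg f → f ∈ E' → e ∈ E')

/-!
The River diagram is built so that every vertex gets at most one incoming edge (R1) and no
cycle ever closes (R2); a finite acyclic digraph of in-degree at most one is a disjoint union
of trees, each hanging from a vertex without incoming edge, and its paths are unique. It
remains to see that there is only one such root. Two distinct alternatives `a`, `b` are
joined in the margin graph, say by `(a, b)`. When River processed this edge it was either
added, so `b` has an incoming edge, or rejected because `b` already had one (R1), or because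
`b` already reached `a` (R2), in which case `a` has an incoming edge. So `a` and `b` are not
both roots.
-/

open Relation

namespace List

variable {α : Type*} {R : α → α → Prop}

theorem prefix_or_prefix_of_isChain (hR : ∀ a b c, R a b → R a c → b = c) :
    ∀ {l₁ l₂ : List α}, IsChain R l₁ → IsChain R l₂ → l₁.head? = l₂.head? →
      l₁ <+: l₂ ∨ l₂ <+: l₁
  | [], _, _, _, _ => Or.inl nil_prefix
  | _ :: _, [], _, _, _ => Or.inr nil_prefix
  | [_], _ :: _, _, _, h => Or.inl (by simpa using h)
  | _ :: _ :: _, [_], _, _, h => Or.inr (by simpa using h.symm)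
  | a :: c :: t₁, b :: d :: t₂, h₁, h₂, h => by
    obtain rfl : a = b := by simpa using h
    obtain rfl : c = d := hR _ _ _ (isChain_cons_cons.mp h₁).1 (isChain_cons_cons.mp h₂).1
    simpa [cons_prefix_cons] using prefix_or_prefix_of_isChain hR h₁.tail h₂.tail rfl

theorem IsSuffix.eq_of_head?_eq {l₁ l₂ : List α} (h : l₁ <:+ l₂) (hnd : l₂.Nodup)
    (hhead : l₁.head? = l₂.head?) : l₁ = l₂ := by
  obtain ⟨_ | ⟨a, s⟩, rfl⟩ := h
  · rfl
  · have ha : a ∈ l₁ := mem_of_mem_head? (by simpa using hhead)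
    exact absurd rfl ((nodup_append.mp hnd).2.2 a mem_cons_self a ha)

end List

section Digraph

variable {V : Type*}

def edgeRel (E : Finset (V × V)) (a b : V) : Prop := (a, b) ∈ E

theorem IsPathFrom.reach_of_mem {E : Finset (V × V)} {l : List V} {x y z : V}
    (hl : IsPathFrom E l x y) (hz : z ∈ l) : Reach E z y := by
  obtain ⟨-, hnd, -, hlast, hchain⟩ := hl
  obtain ⟨s, t, rfl⟩ := List.mem_iff_append.mp hz
  exact ⟨z :: t, List.cons_ne_nil _ _, hnd.of_append_right, rfl, by simpa using hlast,
    hchain.right_of_append⟩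

theorem Reach.cons {E : Finset (V × V)} {x z y : V} (he : (x, z) ∈ E) (h : Reach E z y) :
    Reach E x y := by
  obtain ⟨l, hne, hnd, hhead, hlast, hchain⟩ := h
  by_cases hx : x ∈ l
  · exact IsPathFrom.reach_of_mem ⟨hne, hnd, hhead, hlast, hchain⟩ hx
  · refine ⟨x :: l, List.cons_ne_nil _ _, List.nodup_cons.mpr ⟨hx, hnd⟩, rfl, ?_, ?_⟩
    · simp [List.getLast?_cons, hlast]
    · refine List.isChain_cons.mpr ⟨fun w hw => ?_, hchain⟩
      obtain rfl : z = w := by simpa [hhead] using hw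
      exact he

theorem reach_iff_reflTransGen {E : Finset (V × V)} {x y : V} :
    Reach E x y ↔ ReflTransGen (edgeRel E) x y := by
  constructor
  · rintro ⟨l, hne, -, hhead, hlast, hchain⟩
    have h := List.relationReflTransGen_of_exists_isChain l hchain hne
    rwa [(List.head_eq_iff_head?_eq_some hne).mpr hhead,
      (List.getLast_eq_iff_getLast?_eq_some hne).mpr hlast] at h
  · intro h
    induction h using ReflTransGen.head_induction_on with
    | refl => exact ⟨[y], List.cons_ne_nil _ _, List.nodup_singleton y, rfl, rfl,
        List.isChain_singleton y⟩
    | head hac _ ih => exact ih.cons hac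

theorem Reach.mono {E E' : Finset (V × V)} (hE : E ⊆ E') {x y : V} (h : Reach E x y) :
    Reach E' x y :=
  reach_iff_reflTransGen.mpr <| ReflTransGen.mono (r := edgeRel E) (fun _ _ hab => hE hab) x y
    (reach_iff_reflTransGen.mp h)

theorem Reach.exists_incoming {E : Finset (V × V)} {x y : V} (h : Reach E x y) (hxy : x ≠ y) :
    ¬ noIncoming E y := by
  rcases (reach_iff_reflTransGen.mp h).cases_tail with rfl | ⟨c, -, hcy⟩
  · exact absurd rfl hxy
  · exact fun hy => hy (c, y) hcy rfl

theorem reflTransGen_edgeRel_insert {E : Finset (V × V)} {e : V × V} {a b : V}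
    (h : ReflTransGen (edgeRel (insert e E)) a b) :
    ReflTransGen (edgeRel E) a b ∨
      ReflTransGen (edgeRel E) a e.1 ∧ ReflTransGen (edgeRel E) e.2 b := by
  induction h with
  | refl => exact Or.inl .refl
  | tail _ hcb ih =>
    rcases Finset.mem_insert.mp hcb with rfl | hcb
    · exact Or.inr ⟨ih.elim id And.left, .refl⟩
    · exact ih.imp (·.tail hcb) (And.imp_right (·.tail hcb))

theorem not_hasCycle_insert {D : Finset (V × V)} {e : V × V} (hD : ¬ HasCycle D)
    (he : ¬ Reach D e.2 e.1) : ¬ HasCycle (insert e D) := by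
  simp only [HasCycle, reach_iff_reflTransGen, not_exists, not_and] at hD he ⊢
  intro f hf hcyc
  rcases Finset.mem_insert.mp hf, reflTransGen_edgeRel_insert hcyc with
    ⟨rfl | hf, hcyc | ⟨hfe, hef⟩⟩
  · exact he hcyc
  · exact he hef
  · exact hD f hf hcyc
  · exact he ((hef.tail hf).trans hfe)

theorem exists_noIncoming_reach [Finite V] {D : Finset (V × V)} (hD : ¬ HasCycle D) (v : V) :
    ∃ r, noIncoming D r ∧ Reach D r v := by
  have : IsTrans V (TransGen (edgeRel D)) := ⟨fun _ _ _ => TransGen.trans⟩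
  have : Std.Irrefl (TransGen (edgeRel D)) := ⟨fun x hx => by
    obtain ⟨c, hxc, hcx⟩ := TransGen.tail'_iff.mp hx
    exact hD ⟨(c, x), hcx, reach_iff_reflTransGen.mpr hxc⟩⟩
  obtain ⟨r, hrv, hmin⟩ := (Finite.wellFounded_of_trans_of_irrefl (TransGen (edgeRel D))).has_min
    {u | ReflTransGen (edgeRel D) u v} ⟨v, .refl⟩
  refine ⟨r, fun e he her => ?_, reach_iff_reflTransGen.mpr hrv⟩
  have hedge : edgeRel D e.1 r := her ▸ he
  exact hmin e.1 (ReflTransGen.head hedge hrv) (.single hedge)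

theorem IsPathFrom.eq_of_inDegree_le_one {D : Finset (V × V)}
    (hin : ∀ e ∈ D, ∀ f ∈ D, e.2 = f.2 → e = f) {r v : V} {l₁ l₂ : List V}
    (h₁ : IsPathFrom D l₁ r v) (h₂ : IsPathFrom D l₂ r v) : l₁ = l₂ := by
  have hparent : ∀ a b c, edgeRel D b a → edgeRel D c a → b = c := fun a b c hb hc =>
    congrArg Prod.fst (hin _ hb _ hc rfl)
  -- Read backwards from `v`, a path follows the unique incoming edges.
  have hsuffix := List.prefix_or_prefix_of_isChain (R := fun a b => edgeRel D b a) hparent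
    (List.isChain_reverse.mpr h₁.2.2.2.2) (List.isChain_reverse.mpr h₂.2.2.2.2)
    (by simp only [List.head?_reverse, h₁.2.2.2.1, h₂.2.2.2.1])
  simp only [List.reverse_prefix] at hsuffix
  rcases hsuffix with h | h
  · exact h.eq_of_head?_eq h₂.2.1 (h₁.2.2.1.trans h₂.2.2.1.symm)
  · exact (h.eq_of_head?_eq h₁.2.1 (h₂.2.2.1.trans h₁.2.2.1.symm)).symm

def IsBranching (D : Finset (V × V)) : Prop :=
  (∀ e ∈ D, ∀ f ∈ D, e.2 = f.2 → e = f) ∧ ¬ HasCycle D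

theorem IsBranching.isRootedTree {D : Finset (V × V)} (hD : IsBranching D) {r : V}
    (hr : noIncoming D r) (hreach : ∀ v, Reach D r v) : IsRootedTree D r := by
  refine ⟨fun v => ?_, hr, fun e f he hf => hD.1 e he f hf⟩
  obtain ⟨l, hl⟩ := hreach v
  exact ⟨l, hl, fun l' hl' => hl'.eq_of_inDegree_le_one hD.1 hl⟩

end Digraph

section River

variable {V : Type*}

theorem isBranching_empty : IsBranching (∅ : Finset (V × V)) :=
  ⟨by simp, fun ⟨_, hf, _⟩ => by simp at hf⟩

theorem isBranching_riverStep {D : Finset (V × V)} (hD : IsBranching D) (e : V × V) :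
    IsBranching (riverStep D e) := by
  unfold riverStep
  split_ifs with hblocked
  · exact hD
  obtain ⟨hfresh, hnoreach⟩ := not_or.mp hblocked
  refine ⟨fun f hf g hg hfg => ?_, not_hasCycle_insert hD.2 hnoreach⟩
  rcases Finset.mem_insert.mp hf with rfl | hfD <;> rcases Finset.mem_insert.mp hg with rfl | hgD
  · rfl
  · exact absurd ⟨g, hgD, hfg.symm⟩ hfresh
  · exact absurd ⟨f, hfD, hfg⟩ hfresh
  · exact hD.1 f hfD g hgD hfg

theorem isBranching_foldl_riverStep {D : Finset (V × V)} (hD : IsBranching D)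
    (l : List (V × V)) : IsBranching (l.foldl riverStep D) := by
  induction l generalizing D with
  | nil => exact hD
  | cons e l ih => exact ih (isBranching_riverStep hD e)

theorem isBranching_riverFold (o : List (V × V)) : IsBranching (riverFold o) :=
  isBranching_foldl_riverStep isBranching_empty o

theorem subset_foldl_riverStep (D : Finset (V × V)) (l : List (V × V)) :
    D ⊆ l.foldl riverStep D := by
  induction l generalizing D with
  | nil => exact subset_rfl
  | cons e l ih =>
    refine subset_trans ?_ (ih _)
    unfold riverStep
    split_ifs
    exacts [subset_rfl, Finset.subset_insert _ _]

/-- The rejection test of `riverStep`. It also holds once `e` itself is in `D`, so it persists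
through the rest of the run. -/
def RiverBlocked (D : Finset (V × V)) (e : V × V) : Prop :=
  (∃ f ∈ D, f.2 = e.2) ∨ Reach D e.2 e.1

theorem RiverBlocked.mono {D D' : Finset (V × V)} (hD : D ⊆ D') {e : V × V}
    (h : RiverBlocked D e) : RiverBlocked D' e :=
  h.imp (fun ⟨f, hf, hfe⟩ => ⟨f, hD hf, hfe⟩) (Reach.mono hD)

theorem riverBlocked_riverStep (D : Finset (V × V)) (e : V × V) :
    RiverBlocked (riverStep D e) e := by
  unfold riverStep
  split_ifs with hblocked
  · exact hblocked
  · exact Or.inl ⟨e, Finset.mem_insert_self _ _, rfl⟩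

theorem riverBlocked_foldl_riverStep {e : V × V} {l : List (V × V)} (he : e ∈ l)
    (D : Finset (V × V)) : RiverBlocked (l.foldl riverStep D) e := by
  induction l generalizing D with
  | nil => simp at he
  | cons f l ih =>
    rcases List.mem_cons.mp he with rfl | he
    · exact (riverBlocked_riverStep D e).mono (subset_foldl_riverStep _ l)
    · exact ih he _

theorem RiverBlocked.not_noIncoming {D : Finset (V × V)} {e : V × V} (h : RiverBlocked D e)
    (he : e.1 ≠ e.2) : ¬ (noIncoming D e.1 ∧ noIncoming D e.2) := by
  rintro ⟨h₁, h₂⟩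
  rcases h with ⟨f, hf, hfe⟩ | hreach
  · exact h₂ f hf hfe
  · exact hreach.exists_incoming he.symm h₁

end River

theorem margin_swap {A : Type*} [Fintype A] {m : ℕ} (P : Profile A m) (x y : A) :
    margin P y x = - margin P x y := by
  unfold margin; ring

theorem mem_marginEdges_or_swap {A : Type*} [Fintype A] {m : ℕ} (P : Profile A m) {a b : A}
    (hab : a ≠ b) : (a, b) ∈ marginEdges P ∨ (b, a) ∈ marginEdges P := by
  simp only [marginEdges, Finset.mem_filter, Finset.mem_univ, true_and, margin_swap P a b,
    Left.nonneg_neg_iff]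
  exact (le_total 0 (margin P a b)).imp (⟨hab, ·⟩) (⟨hab.symm, ·⟩)

theorem eq_of_noIncoming_riverFold {A : Type*} [Fintype A] {m : ℕ} {P : Profile A m}
    {o : List (A × A)} (ho : IsDescOrdering (marginE P) (marginEdges P) o) {a b : A}
    (ha : noIncoming (riverFold o) a) (hb : noIncoming (riverFold o) b) : a = b := by
  by_contra hab
  rcases mem_marginEdges_or_swap P hab with h | h
  · exact (riverBlocked_foldl_riverStep ((ho.2.1 _).mpr h) ∅).not_noIncoming hab ⟨ha, hb⟩
  · exact (riverBlocked_foldl_riverStep ((ho.2.1 _).mpr h) ∅).not_noIncoming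
      (Ne.symm hab) ⟨hb, ha⟩

theorem river_diagram_is_rooted_tree_with_unique_winner_root_general
    {A : Type*} [Fintype A] {m : ℕ} (hA : 2 ≤ Fintype.card A)
    (P : Profile A m) (o : List (A × A))
    (ho : IsDescOrdering (marginE P) (marginEdges P) o) :
    ∃ r : A, IsRootedTree (riverFold o) r ∧
      (∀ r' : A, IsRootedTree (riverFold o) r' → r' = r) ∧
      ∀ a : A, noIncoming (riverFold o) a ↔ a = r := by
  have : Nonempty A := Fintype.card_pos_iff.mp (by omega)
  have hacyclic := (isBranching_riverFold o).2
  obtain ⟨r, hr, -⟩ := exists_noIncoming_reach hacyclic (Classical.arbitrary A)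
  have hunique : ∀ a, noIncoming (riverFold o) a → a = r :=
    fun a ha => eq_of_noIncoming_riverFold ho ha hr
  have hreach : ∀ v, Reach (riverFold o) r v := fun v => by
    obtain ⟨r', hr', hr'v⟩ := exists_noIncoming_reach hacyclic v
    exact hunique r' hr' ▸ hr'v
  exact ⟨r, (isBranching_riverFold o).isRootedTree hr hreach,
    fun r' hr' => hunique r' hr'.2.1, fun a => ⟨hunique a, fun h => h ▸ hr⟩⟩

/-- For every preference profile `P` and every descending linear
ordering `o` of the edges of its margin graph, the River diagram `M^RV(o)` is a rooted
tree, its root is unique, and the root is the unique River winner (the unique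
alternative with no incoming edge in the River diagram). -/
theorem river_diagram_is_rooted_tree_with_unique_winner_root
    {A : Type*} [Fintype A] {m : ℕ} (hm : 1 ≤ m) (hA : 2 ≤ Fintype.card A)
    (P : Profile A m) (o : List (A × A))
    (ho : IsDescOrdering (marginE P) (marginEdges P) o) :
    ∃ r : A, IsRootedTree (riverFold o) r ∧
      (∀ r' : A, IsRootedTree (riverFold o) r' → r' = r) ∧
      ∀ a : A, noIncoming (riverFold o) a ↔ a = r :=
  river_diagram_is_rooted_tree_with_unique_winner_root_general hA P o ho
end

section
/- Let P be a preference profile and o ∈ O↓ a descending linear ordering of E(M(P)), and consider the moment when River processes the edge o[i] = (x,y). If condition (R1) is satisfied for o[i], then the incoming edge of y already present in M^RV_{i−1}(o) has margin at least m_P(x,y); and if condition (R2) is satisfied for o[i], then there is a path from y to x in M^RV_{i−1}(o) whose strength is at least m_P(x,y). -/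
attribute [local instance] Classical.propDecidable

/- Every edge River has kept so far was processed before `o[i]`, hence has margin at least
`m_P(x, y)`; a path witnessing (R2) consists of such edges. -/

theorem List.Pairwise.rel_get_of_mem_take {α : Type*} {R : α → α → Prop} {o : List α}
    (h : o.Pairwise R) {i : ℕ} (hi : i < o.length) {a : α} (ha : a ∈ o.take i) :
    R a (o.get ⟨i, hi⟩) := by
  rw [← o.take_append_drop i, List.pairwise_append] at h
  exact h.2.2 a ha _ (List.mem_drop_iff_getElem.2 ⟨0, by simpa using hi, rfl⟩)

theorem List.IsChain.rel_of_mem_zip_tail {α : Type*} {R : α → α → Prop} {l : List α}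
    (h : l.IsChain R) {p : α × α} (hp : p ∈ l.zip l.tail) : R p.1 p.2 := by
  induction l with
  | nil => simp at hp
  | cons a l ih =>
    cases l with
    | nil => simp at hp
    | cons b l =>
      rw [List.isChain_cons_cons] at h
      simp only [List.tail_cons, List.zip_cons_cons, List.mem_cons] at hp
      rcases hp with rfl | hp
      · exact h.1
      · exact ih h.2 hp

theorem IsPathFrom.mem_of_mem_zip_tail {V : Type*} {E : Finset (V × V)} {l : List V} {x y : V}
    (hl : IsPathFrom E l x y) {p : V × V} (hp : p ∈ l.zip l.tail) : p ∈ E :=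
  hl.2.2.2.2.rel_of_mem_zip_tail hp

theorem riverStep_subset_insert {V : Type*} (D : Finset (V × V)) (e : V × V) :
    riverStep D e ⊆ insert e D := by
  unfold riverStep
  split_ifs
  exacts [Finset.subset_insert e D, subset_rfl]

theorem mem_of_mem_foldl_riverStep {V : Type*} {o : List (V × V)} {D : Finset (V × V)}
    {f : V × V} (hf : f ∈ o.foldl riverStep D) : f ∈ D ∨ f ∈ o := by
  induction o generalizing D with
  | nil => exact Or.inl hf
  | cons a o ih =>
    rcases ih hf with h | h
    · rcases Finset.mem_insert.1 (riverStep_subset_insert D a h) with rfl | h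
      · exact Or.inr List.mem_cons_self
      · exact Or.inl h
    · exact Or.inr (List.mem_cons_of_mem a h)

theorem mem_of_mem_foldl_riverStep_empty {V : Type*} {o : List (V × V)} {f : V × V}
    (hf : f ∈ o.foldl riverStep ∅) : f ∈ o :=
  (mem_of_mem_foldl_riverStep hf).resolve_left (Finset.notMem_empty f)

theorem river_conditions_need_at_least_current_margin_general
    {A : Type*} [Fintype A] {m : ℕ}
    (P : Profile A m) (o : List (A × A))
    (ho : IsDescOrdering (marginE P) (marginEdges P) o)
    (i : ℕ) (hi : i < o.length) (e : A × A) (he : o.get ⟨i, hi⟩ = e) :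
    ((∃ f ∈ (o.take i).foldl riverStep ∅, f.2 = e.2) →
      ∀ f ∈ (o.take i).foldl riverStep ∅, f.2 = e.2 → marginE P e ≤ marginE P f) ∧
    (Reach ((o.take i).foldl riverStep ∅) e.2 e.1 →
      ∃ l : List A, IsPathFrom ((o.take i).foldl riverStep ∅) l e.2 e.1 ∧
        ∀ p ∈ l.zip l.tail, marginE P e ≤ marginE P p) := by
  have hbound : ∀ f ∈ (o.take i).foldl riverStep ∅, marginE P e ≤ marginE P f :=
    fun f hf => he ▸ ho.2.2.rel_get_of_mem_take hi (mem_of_mem_foldl_riverStep_empty hf)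
  exact ⟨fun _ f hf _ => hbound f hf,
    fun ⟨l, hl⟩ => ⟨l, hl, fun p hp => hbound p (hl.mem_of_mem_zip_tail hp)⟩⟩

/-- When River processes the edge `o[i] = (x, y)` (with current
diagram `D = M^RV_{i-1}(o)`, the diagram after the first `i - 1` edges, here indexed
from `0`): if condition (R1) holds, then every incoming edge of `y` already present in
`D` has margin at least `m_P(x, y)`; and if condition (R2) holds, then there is a path
from `y` to `x` in `D` all of whose edges have margin at least `m_P(x, y)` (i.e. of
strength at least `m_P(x, y)`). -/
theorem river_conditions_need_at_least_current_margin
    {A : Type*} [Fintype A] {m : ℕ} (hm : 1 ≤ m) (hA : 2 ≤ Fintype.card A)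
    (P : Profile A m) (o : List (A × A))
    (ho : IsDescOrdering (marginE P) (marginEdges P) o)
    (i : ℕ) (hi : i < o.length) (e : A × A) (he : o.get ⟨i, hi⟩ = e) :
    ((∃ f ∈ (o.take i).foldl riverStep ∅, f.2 = e.2) →
      ∀ f ∈ (o.take i).foldl riverStep ∅, f.2 = e.2 → marginE P e ≤ marginE P f) ∧
    (Reach ((o.take i).foldl riverStep ∅) e.2 e.1 →
      ∃ l : List A, IsPathFrom ((o.take i).foldl riverStep ∅) l e.2 e.1 ∧
        ∀ p ∈ l.zip l.tail, marginE P e ≤ marginE P p) :=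
  river_conditions_need_at_least_current_margin_general P o ho i hi e he
end

section
/- For every preference profile P, the semi-River process produces the same semi-River diagram regardless of which descending linear ordering of E(M(P)) is chosen in its first step: for any two orderings o, o' ∈ O↓, running the semi-River process with o and with o' yields identical diagrams. -/
attribute [local instance] Classical.propDecidable

/-!
The decision whether the semi-River process accepts an edge `e` only looks at
edges of margin strictly greater than that of `e` (condition sR1 also uses edges of margin at
least `marg e'`, but those are heavier than `e` as well). Hence steps on edges of equal margin
commute, and two descending orderings of the same edges differ only by permuting edges of
equal margin.
-/

namespace List

variable {α β γ : Type*} [PartialOrder γ]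

theorem foldl_append_cons_eq_of_comm {f : β → α → β} {l₁ l₂ : List α} {e : α}
    (hcomm : ∀ x ∈ e :: l₁, ∀ y ∈ e :: l₁, ∀ z, f (f z x) y = f (f z y) x) (s : β) :
    foldl f s (l₁ ++ e :: l₂) = foldl f (f s e) (l₁ ++ l₂) := by
  have hperm : (l₁ ++ [e]).Perm (e :: l₁) := perm_append_singleton e l₁
  calc foldl f s (l₁ ++ e :: l₂)
      = foldl f (foldl f s (l₁ ++ [e])) l₂ := by simp
    _ = foldl f (foldl f s (e :: l₁)) l₂ := by
        rw [hperm.foldl_eq' (fun x hx y hy => hcomm x (hperm.subset hx) y (hperm.subset hy))]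
    _ = foldl f (f s e) (l₁ ++ l₂) := by simp

theorem foldl_eq_of_perm_of_pairwise_key_ge {f : β → α → β} (key : α → γ)
    (hcomm : ∀ a b, key a = key b → ∀ s, f (f s a) b = f (f s b) a)
    {l l' : List α} (hperm : l.Perm l')
    (hl : l.Pairwise fun a b => key b ≤ key a) (hl' : l'.Pairwise fun a b => key b ≤ key a)
    (s : β) : foldl f s l = foldl f s l' := by
  induction l generalizing l' s with
  | nil => rw [hperm.nil_eq]
  | cons e t ih =>
    obtain ⟨l₁, l₂, rfl⟩ := append_of_mem (hperm.subset mem_cons_self)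
    have htail : t.Perm (l₁ ++ l₂) := (hperm.trans perm_middle).cons_inv
    have hkey : ∀ a ∈ l₁, key a = key e := fun a ha =>
      le_antisymm ((pairwise_cons.mp hl).1 a (htail.symm.subset (mem_append_left l₂ ha)))
        ((pairwise_append.mp hl').2.2 a ha e mem_cons_self)
    have hkey' : ∀ a ∈ e :: l₁, key a = key e := by
      simpa only [forall_mem_cons, true_and] using hkey
    rw [foldl_append_cons_eq_of_comm
      (fun x hx y hy z => hcomm x y ((hkey' x hx).trans (hkey' y hy).symm) z)]
    exact ih htail (pairwise_cons.mp hl).2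
      (hl'.sublist ((sublist_cons_self e l₂).append_left l₁)) _

end List

section SemiRiver

variable {V : Type*}

/-- The rejection test of `semiRiverStep` for `e`, as a function of the edges `H` of the
diagram with margin strictly greater than `marg e`. -/
def SemiRiverRejects (marg : V × V → ℤ) (H : Finset (V × V)) (e : V × V) : Prop :=
  let Anc : Set V := {v | Reach (H.filter fun g => g.2 ≠ e.2) v e.1}
  let ind := H.filter fun g => g.1 ∈ Anc ∧ g.2 ∈ Anc
  (∃ f ∈ H, f.2 = e.2 ∧ ¬ Reach (H.filter fun g => marg f ≤ marg g) e.2 f.1) ∨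
    (e.2 ∈ Anc ∧ ¬ HasCycle ind ∧ ∀ v ∈ Anc, ((∀ g ∈ ind, g.2 ≠ v) ↔ v = e.2))

theorem semiRiverStep_eq_ite (marg : V × V → ℤ) (D : Finset (V × V)) (e : V × V) :
    semiRiverStep marg D e =
      if SemiRiverRejects marg (D.filter fun f => marg e < marg f) e then D
      else insert e D := by
  have hheavier : ∀ f ∈ D.filter (fun f => marg e < marg f),
      (D.filter fun f => marg e < marg f).filter (fun g => marg f ≤ marg g) =
        D.filter fun g => marg f ≤ marg g := by
    intro f hf
    rw [Finset.filter_filter]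
    exact Finset.filter_congr fun g _ =>
      and_iff_right_of_imp ((Finset.mem_filter.mp hf).2.trans_le)
  dsimp only [semiRiverStep, SemiRiverRejects]
  congr 1
  exact propext <| or_congr_left <| exists_congr fun f => and_congr_right fun hf => by
    rw [hheavier f hf]

theorem filter_margin_gt_semiRiverStep {marg : V × V → ℤ} {a b : V × V}
    (hab : marg a ≤ marg b) (D : Finset (V × V)) :
    (semiRiverStep marg D a).filter (fun f => marg b < marg f) =
      D.filter fun f => marg b < marg f := by
  rw [semiRiverStep_eq_ite]
  split_ifs
  · rfl
  · rw [Finset.filter_insert, if_neg hab.not_gt]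

theorem semiRiverStep_comm {marg : V × V → ℤ} {a b : V × V} (hab : marg a = marg b)
    (D : Finset (V × V)) :
    semiRiverStep marg (semiRiverStep marg D a) b =
      semiRiverStep marg (semiRiverStep marg D b) a := by
  conv_lhs => rw [semiRiverStep_eq_ite marg _ b, filter_margin_gt_semiRiverStep hab.le]
  conv_rhs => rw [semiRiverStep_eq_ite marg _ a, filter_margin_gt_semiRiverStep hab.ge]
  rw [semiRiverStep_eq_ite marg D a, semiRiverStep_eq_ite marg D b]
  split_ifs <;> simp only [Finset.insert_comm]

theorem semiRiverFold_eq_of_perm {marg : V × V → ℤ} {o o' : List (V × V)}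
    (hperm : o.Perm o') (ho : o.Pairwise fun e f => marg f ≤ marg e)
    (ho' : o'.Pairwise fun e f => marg f ≤ marg e) :
    semiRiverFold marg o = semiRiverFold marg o' :=
  List.foldl_eq_of_perm_of_pairwise_key_ge marg
    (fun _ _ hab => semiRiverStep_comm hab) hperm ho ho' ∅

end SemiRiver

theorem semi_river_diagram_independent_of_ordering_general
    {A : Type*} [Fintype A] {m : ℕ}
    (P : Profile A m) (o o' : List (A × A))
    (ho : IsDescOrdering (marginE P) (marginEdges P) o)
    (ho' : IsDescOrdering (marginE P) (marginEdges P) o') :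
    semiRiverFold (marginE P) o = semiRiverFold (marginE P) o' := by
  obtain ⟨hnd, hmem, hsorted⟩ := ho
  obtain ⟨hnd', hmem', hsorted'⟩ := ho'
  have hperm : o.Perm o' :=
    (List.perm_ext_iff_of_nodup hnd hnd').mpr fun e => (hmem e).trans (hmem' e).symm
  exact semiRiverFold_eq_of_perm hperm hsorted hsorted'

/-- The semi-River process produces the same semi-River diagram
regardless of which descending linear ordering of the edges of the margin graph is
chosen in its first step. -/
theorem semi_river_diagram_independent_of_ordering
    {A : Type*} [Fintype A] {m : ℕ} (hm : 1 ≤ m) (hA : 2 ≤ Fintype.card A)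
    (P : Profile A m) (o o' : List (A × A))
    (ho : IsDescOrdering (marginE P) (marginEdges P) o)
    (ho' : IsDescOrdering (marginE P) (marginEdges P) o') :
    semiRiverFold (marginE P) o = semiRiverFold (marginE P) o' :=
  semi_river_diagram_independent_of_ordering_general P o o' ho ho'
end

section
/- Let G = (V,E) be a finite weighted directed graph with weight function w : E → ℕ, and let s ∈ V have a path in G to every other vertex of V. Then every possible output T^RSP(s,G) of the directed Prim algorithm started at s is a recursively strongest path tree of G rooted at s: it is a rooted tree on V with root s, and whenever u precedes v in the tree, the unique tree path from u to v is a recursive strongest path in G. -/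
attribute [local instance] Classical.propDecidable

/-! The directed Prim algorithm keeps the following invariant on its explored set `S` and tree
`T`: a path of `T` from `a` is at least as strong as every path of `G` from `a` that ends at the
same vertex or leaves `S`. When the crossing edge `e = (x, y)` of maximum weight is added, a new
tree path is an old tree path to `x` followed by `e`, while a path of `G` from `a` to `y` or
beyond leaves the old `S`: it is no stronger than the old tree path by the invariant, and no
stronger than `e` because it uses some crossing edge. Contiguous pieces of tree paths are tree
paths, hence strongest paths; tree paths are unique because every vertex has at most one
incoming tree edge. -/

namespace List

variable {α : Type*} {R : α → α → Prop}

lemma le_foldr_min_iff {β : Type*} [LinearOrder β] [OrderTop β] {c : β} :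
    ∀ {A : List β}, c ≤ A.foldr min ⊤ ↔ ∀ a ∈ A, c ≤ a
  | [] => by simp
  | a :: A => by simp [le_foldr_min_iff]

lemma zip_tail_append_singleton :
    ∀ {l : List α} {x : α}, l.getLast? = some x → ∀ y : α,
      (l ++ [y]).zip (l ++ [y]).tail = l.zip l.tail ++ [(x, y)]
  | [], _, h, _ => by simp at h
  | [a], _, h, _ => by simp_all
  | a :: b :: t, x, h, y => by
    rw [getLast?_cons_cons] at h
    simpa using zip_tail_append_singleton h y

lemma IsChain.exists_mem_zip_tail_crossing {P : α → Prop} :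
    ∀ {l : List α} {a b : α}, l.IsChain R → l.head? = some a → l.getLast? = some b →
      P a → ¬ P b → ∃ p ∈ l.zip l.tail, R p.1 p.2 ∧ P p.1 ∧ ¬ P p.2
  | [], _, _, _, ha, _, _, _ => by simp at ha
  | [x], _, _, _, ha, hb, hPa, hPb => by simp_all
  | x :: y :: t, a, b, h, ha, hb, hPa, hPb => by
    obtain rfl : x = a := by simpa using ha
    rw [isChain_cons_cons] at h
    by_cases hPy : P y
    · obtain ⟨p, hp, hRp⟩ := h.2.exists_mem_zip_tail_crossing head?_cons
        (by rwa [getLast?_cons_cons] at hb) hPy hPb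
      exact ⟨p, mem_cons_of_mem _ hp, hRp⟩
    · exact ⟨(x, y), by simp, h.1, hPa, hPy⟩

lemma IsChain.forall_mem_of_getLast? {P : α → Prop} (hR : ∀ x y, R x y → P x) :
    ∀ {l : List α} {b : α}, l.IsChain R → l.getLast? = some b → P b → ∀ u ∈ l, P u
  | [], _, _, _, _ => by simp
  | [x], _, _, hb, hPb => by simp_all
  | x :: y :: t, b, h, hb, hPb => by
    rw [isChain_cons_cons] at h
    rw [getLast?_cons_cons] at hb
    simpa [hR x y h.1] using h.2.forall_mem_of_getLast? hR hb hPb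

end List

section Strength

variable {V : Type*} {w : V × V → ℕ} {l : List V}

lemma le_strength_iff {c : ℕ∞} : c ≤ strength w l ↔ ∀ p ∈ l.zip l.tail, c ≤ w p := by
  simp only [strength, List.le_foldr_min_iff, List.forall_mem_map]

lemma strength_le_of_mem {p : V × V} (hp : p ∈ l.zip l.tail) : strength w l ≤ w p :=
  le_strength_iff.1 le_rfl p hp

lemma strength_append_singleton {x : V} (hx : l.getLast? = some x) (y : V) :
    strength w (l ++ [y]) = min (strength w l) (w (x, y)) :=
  eq_of_forall_le_iff fun c => by
    simp [le_strength_iff, List.zip_tail_append_singleton hx, or_imp, forall_and]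

end Strength

namespace IsPathFrom

variable {V : Type*} {D D' : Finset (V × V)} {l : List V} {a b : V}

lemma singleton (D : Finset (V × V)) (a : V) : IsPathFrom D [a] a a :=
  ⟨List.cons_ne_nil a [], List.nodup_singleton a, rfl, rfl, List.isChain_singleton a⟩

lemma mono (hDD' : D ⊆ D') (h : IsPathFrom D l a b) : IsPathFrom D' l a b :=
  ⟨h.1, h.2.1, h.2.2.1, h.2.2.2.1, h.2.2.2.2.imp fun _ _ hxy => hDD' hxy⟩

lemma of_isInfix {l₂ : List V} {x y : V} (h : IsPathFrom D l a b) (hl₂ : l₂ <:+: l)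
    (hx : l₂.head? = some x) (hy : l₂.getLast? = some y) : IsPathFrom D l₂ x y :=
  ⟨by rintro rfl; simp at hx, h.2.1.sublist hl₂.sublist, hx, hy, h.2.2.2.2.infix hl₂⟩

lemma eq_singleton (h : IsPathFrom D l a a) : l = [a] := by
  obtain ⟨-, hnd, ha, ha', -⟩ := h
  rcases l with _ | ⟨x, _ | ⟨y, t⟩⟩
  · simp at ha
  · simpa using ha
  · obtain rfl : x = a := by simpa using ha
    rw [List.getLast?_cons_cons] at ha'
    exact absurd (List.mem_of_getLast? ha') (List.nodup_cons.1 hnd).1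

lemma snoc {c : V} (h : IsPathFrom D l a b) (hbc : (b, c) ∈ D) (hc : c ∉ l) :
    IsPathFrom D (l ++ [c]) a c := by
  obtain ⟨hne, hnd, ha, hb, hch⟩ := h
  refine ⟨by simp, hnd.append (List.nodup_singleton c) (by simpa using hc),
    by rwa [List.head?_append_of_ne_nil _ hne], by simp, ?_⟩
  exact List.isChain_append.2 ⟨hch, .singleton c, by simp_all⟩

lemma eq_singleton_or_snoc (h : IsPathFrom D l a b) :
    (l = [a] ∧ b = a) ∨
      ∃ l₀ p, l = l₀ ++ [b] ∧ IsPathFrom D l₀ a p ∧ (p, b) ∈ D ∧ b ∉ l₀ := by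
  obtain ⟨hne, hnd, ha, hb, hch⟩ := h
  obtain ⟨l₀, rfl⟩ : ∃ l₀, l = l₀ ++ [b] :=
    ⟨l.dropLast, (List.dropLast_append_getLast? b hb).symm⟩
  rcases l₀.eq_nil_or_concat with rfl | ⟨l₁, p, rfl⟩
  · simp_all
  · right
    rw [List.concat_eq_append] at *
    replace hch := List.isChain_append.1 hch
    rw [List.nodup_append] at hnd
    refine ⟨l₁ ++ [p], p, rfl, ⟨by simp, hnd.1, ?_, by simp, hch.1⟩, by simpa using hch.2.2,
      fun hbl => hnd.2.2 b hbl b (by simp) rfl⟩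
    rwa [List.head?_append_of_ne_nil _ (by simp)] at ha

lemma eq_of_mem_of_forall_fst_ne {v : V} (h : IsPathFrom D l a b) (hv : v ∈ l)
    (hout : ∀ f ∈ D, f.1 ≠ v) : v = b := by
  obtain ⟨l₁, _ | ⟨c, t⟩, rfl⟩ := List.append_of_mem hv
  · simpa using h.2.2.2.1
  · exact absurd rfl (hout _ (List.isChain_append_cons_cons.1 h.2.2.2.2).2.1)

lemma of_insert {e : V × V} (h : IsPathFrom (insert e D) l a b) (he : e.2 ∉ l) :
    IsPathFrom D l a b :=
  ⟨h.1, h.2.1, h.2.2.1, h.2.2.2.1, h.2.2.2.2.imp_of_mem_imp fun x y _ hy hxy =>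
    (Finset.mem_insert.1 hxy).resolve_left (by rintro rfl; exact he hy)⟩

lemma of_insert_of_fresh {e : V × V} (h : IsPathFrom (insert e D) l a b) (hne : e.1 ≠ e.2)
    (hfresh : ∀ f ∈ D, f.1 ≠ e.2 ∧ f.2 ≠ e.2) :
    IsPathFrom D l a b ∨ b = e.2 ∧ ∃ l₀, l = l₀ ++ [e.2] ∧ IsPathFrom D l₀ a e.1 := by
  by_cases he : e.2 ∈ l
  · obtain rfl := h.eq_of_mem_of_forall_fst_ne he fun f hf => by
      rcases Finset.mem_insert.1 hf with rfl | hf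
      exacts [hne, (hfresh f hf).1]
    rcases h.eq_singleton_or_snoc with ⟨rfl, hab⟩ | ⟨l₀, p, rfl, hl₀, hp, hbl₀⟩
    · exact .inl (hab ▸ singleton D _)
    obtain rfl : p = e.1 := by
      rcases Finset.mem_insert.1 hp with hpe | hp
      exacts [congrArg Prod.fst hpe, absurd rfl (hfresh _ hp).2]
    exact .inr ⟨rfl, l₀, rfl, hl₀.of_insert hbl₀⟩
  · exact .inl (h.of_insert he)

lemma eq_of_injOn_snd (hD : Set.InjOn Prod.snd (D : Set (V × V))) {l' : List V}
    (h : IsPathFrom D l a b) (h' : IsPathFrom D l' a b) : l = l' := by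
  induction hn : l.length using Nat.strong_induction_on generalizing l l' b with
  | _ n ih =>
    rcases h.eq_singleton_or_snoc with ⟨rfl, rfl⟩ | ⟨l₀, p, rfl, hl₀, hp, -⟩
    · exact h'.eq_singleton.symm
    rcases h'.eq_singleton_or_snoc with ⟨rfl, rfl⟩ | ⟨l₀', p', rfl, hl₀', hp', -⟩
    · exact h.eq_singleton
    obtain rfl : p = p' := congrArg Prod.fst (hD hp hp' rfl)
    rw [ih l₀.length (by simp [← hn]) hl₀ hl₀' rfl]

lemma strength_le_of_crossing {w : V × V → ℕ} {S : Finset V} {c : ℕ}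
    (hmax : ∀ f ∈ D, f.1 ∈ S → f.2 ∉ S → w f ≤ c) (h : IsPathFrom D l a b)
    (ha : a ∈ S) (hb : b ∉ S) : strength w l ≤ c := by
  obtain ⟨p, hp, hpD, hpS⟩ := h.2.2.2.2.exists_mem_zip_tail_crossing h.2.2.1 h.2.2.2.1 ha hb
  exact (strength_le_of_mem hp).trans (Nat.cast_le.2 (hmax p hpD hpS.1 hpS.2))

end IsPathFrom

lemma Reach.mem_of_forall_mem {V : Type*} {E : Finset (V × V)} {S : Finset V} {s v : V}
    (hE : ∀ f ∈ E, f.1 ∈ S → f.2 ∈ S) (hs : s ∈ S) (h : Reach E s v) : v ∈ S := by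
  obtain ⟨l, hl⟩ := h
  by_contra hv
  obtain ⟨p, -, hpE, hpS⟩ := hl.2.2.2.2.exists_mem_zip_tail_crossing hl.2.2.1 hl.2.2.2.1 hs hv
  exact hpS.2 (hE p hpE hpS.1)

namespace PrimRun

variable {V β : Type*} [LinearOrder β] {E : Finset (V × V)} {w : V × V → β} {s : V}
  {S : Finset V} {T : Finset (V × V)}

lemma root_mem (h : PrimRun E w s S T) : s ∈ S := by
  induction h with
  | init => exact Finset.mem_singleton_self s
  | step => exact Finset.mem_insert_of_mem ‹_›

lemma subset (h : PrimRun E w s S T) : T ⊆ E := by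
  induction h with
  | init => exact Finset.empty_subset E
  | step e he _ _ _ _ ih => exact Finset.insert_subset he ih

lemma mem_of_mem_tree (h : PrimRun E w s S T) {f : V × V} (hf : f ∈ T) :
    f.1 ∈ S ∧ f.2 ∈ S := by
  induction h with
  | init => simp at hf
  | step e _ h1 _ _ _ ih =>
    rcases Finset.mem_insert.1 hf with rfl | hf
    · exact ⟨Finset.mem_insert_of_mem h1, Finset.mem_insert_self _ _⟩
    · exact (ih hf).imp (Finset.mem_insert_of_mem ·) (Finset.mem_insert_of_mem ·)

lemma forall_mem_of_isPathFrom (h : PrimRun E w s S T) {l : List V} {a b : V}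
    (hl : IsPathFrom T l a b) (hb : b ∈ S) : ∀ u ∈ l, u ∈ S :=
  hl.2.2.2.2.forall_mem_of_getLast? (R := fun x y => (x, y) ∈ T)
    (fun _ _ hxy => (h.mem_of_mem_tree hxy).1) hl.2.2.2.1 hb

lemma snd_ne_root (h : PrimRun E w s S T) : ∀ f ∈ T, f.2 ≠ s := by
  induction h with
  | init => simp
  | step e _ _ h2 _ hrun ih =>
    intro f hf
    rcases Finset.mem_insert.1 hf with rfl | hf
    exacts [fun hs => h2 (hs ▸ hrun.root_mem), ih f hf]

lemma injOn_snd (h : PrimRun E w s S T) : Set.InjOn Prod.snd (T : Set (V × V)) := by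
  induction h with
  | init => simp
  | step e _ _ h2 _ hrun ih =>
    rw [Finset.coe_insert, Set.injOn_insert fun he => h2 (hrun.mem_of_mem_tree he).2]
    refine ⟨ih, ?_⟩
    rintro ⟨f, hf, hfe⟩
    exact h2 (hfe ▸ (hrun.mem_of_mem_tree hf).2)

lemma exists_path (h : PrimRun E w s S T) {v : V} (hv : v ∈ S) : ∃ l, IsPathFrom T l s v := by
  induction h generalizing v with
  | init => exact ⟨[s], by simpa [Finset.mem_singleton.1 hv] using IsPathFrom.singleton ∅ s⟩
  | @step S T e _ h1 h2 _ hrun ih =>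
    rcases Finset.mem_insert.1 hv with rfl | hv
    · obtain ⟨l, hl⟩ := ih h1
      exact ⟨l ++ [e.2], (hl.mono (Finset.subset_insert e T)).snoc (Finset.mem_insert_self e T)
        fun he => h2 (hrun.forall_mem_of_isPathFrom hl h1 _ he)⟩
    · obtain ⟨l, hl⟩ := ih hv
      exact ⟨l, hl.mono (Finset.subset_insert e T)⟩

end PrimRun

lemma PrimRun.strength_le {V : Type*} {E : Finset (V × V)} {w : V × V → ℕ} {s : V}
    {S : Finset V} {T : Finset (V × V)} (h : PrimRun E w s S T) {l l' : List V} {a b v : V}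
    (hl : IsPathFrom T l a b) (hl' : IsPathFrom E l' a v) (hv : v = b ∨ v ∉ S) :
    strength w l' ≤ strength w l := by
  induction h generalizing l a b v with
  | init =>
    rcases hl.eq_singleton_or_snoc with ⟨rfl, -⟩ | ⟨_, _, -, -, hp, -⟩
    · exact le_top
    · simp at hp
  | @step S T e _ h1 h2 hmax hrun ih =>
    have hfresh : ∀ f ∈ T, f.1 ≠ e.2 ∧ f.2 ≠ e.2 := fun f hf =>
      (hrun.mem_of_mem_tree hf).imp (ne_of_mem_of_not_mem · h2) (ne_of_mem_of_not_mem · h2)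
    rcases hl.of_insert_of_fresh (ne_of_mem_of_not_mem h1 h2) hfresh with
      hl | ⟨rfl, l₀, rfl, hl₀⟩
    · exact ih hl hl' (hv.imp_right fun hv hvS => hv (Finset.mem_insert_of_mem hvS))
    · have hvS : v ∉ S := by
        rcases hv with rfl | hv
        exacts [h2, fun hvS => hv (Finset.mem_insert_of_mem hvS)]
      have haS : a ∈ S :=
        hrun.forall_mem_of_isPathFrom hl₀ h1 a (List.mem_of_mem_head? hl₀.2.2.1)
      rw [strength_append_singleton hl₀.2.2.2.1]
      exact le_min (ih hl₀ hl' (.inr hvS)) (hl'.strength_le_of_crossing hmax haS hvS)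

theorem directed_prim_output_is_recursively_strongest_path_tree_general
    {V : Type*} (E : Finset (V × V)) (w : V × V → ℕ) (s : V)
    (hreach : ∀ v : V, Reach E s v)
    (T : Finset (V × V)) (hT : IsPrimOutput E w s T) :
    IsRootedTree T s ∧
      ∀ (u v : V) (l : List V), IsPathFrom T l u v →
        ∀ (l₁ l₂ l₃ : List V) (a b : V), l = l₁ ++ l₂ ++ l₃ →
          l₂.head? = some a → l₂.getLast? = some b → IsStrongestPath E w l₂ a b := by
  obtain ⟨S, hrun, hclosed⟩ := hT
  refine ⟨⟨fun v => ?_, hrun.snd_ne_root, fun e f he hf => hrun.injOn_snd he hf⟩, ?_⟩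
  · obtain ⟨l, hl⟩ := hrun.exists_path ((hreach v).mem_of_forall_mem hclosed hrun.root_mem)
    exact ⟨l, hl, fun l' hl' => hl'.eq_of_injOn_snd hrun.injOn_snd hl⟩
  · rintro u v l hl l₁ l₂ l₃ a b rfl ha hb
    have hl₂ : IsPathFrom T l₂ a b := hl.of_isInfix ⟨l₁, l₃, rfl⟩ ha hb
    exact ⟨hl₂.mono hrun.subset, fun l' hl' => hrun.strength_le hl₂ hl' (.inl rfl)⟩

/-- Let `G = (V, E)` be a finite weighted directed graph with weight
function `w : E → ℕ` and let `s` have a path in `G` to every vertex. Then every possible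
output `T` of the directed Prim algorithm started at `s` is a recursively strongest path
tree of `G` rooted at `s`: it is a rooted tree with root `s`, and whenever `u` precedes
`v` in `T`, the unique tree path from `u` to `v` is a recursive strongest path in `G`
(every contiguous subpath of it is a strongest path in `G`). -/
theorem directed_prim_output_is_recursively_strongest_path_tree
    {V : Type*} [Fintype V] (E : Finset (V × V)) (w : V × V → ℕ) (s : V)
    (hreach : ∀ v : V, Reach E s v)
    (T : Finset (V × V)) (hT : IsPrimOutput E w s T) :
    IsRootedTree T s ∧
      ∀ (u v : V) (l : List V), IsPathFrom T l u v →
        ∀ (l₁ l₂ l₃ : List V) (a b : V), l = l₁ ++ l₂ ++ l₃ →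
          l₂.head? = some a → l₂.getLast? = some b → IsStrongestPath E w l₂ a b :=
  directed_prim_output_is_recursively_strongest_path_tree_general E w s hreach T hT
end

section
/- Let G = (V,E) be a finite weighted directed graph with weight function w : E → ℕ, and let s ∈ V have a path in G to every other vertex of V. Then there exists a rooted tree T on V with root s and E(T) ⊆ E such that whenever there is a path from u to v in T, that unique path is a recursive strongest path in G. -/
/-!
Run Prim's algorithm from `s`, always adding a heaviest edge leaving the explored set, and rank
each vertex by the step at which it is explored. Ranks increase along tree edges, which makes
the output a tree rooted at `s`; subpaths of tree paths are again tree paths. When the tree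
edge `(p, q)` was chosen, the explored vertices were those of rank below `r q`, so no edge of
`G` from rank below `r q` to rank at least `r q` is heavier than `(p, q)`. A tree path from `u`
to `v` through `(p, q)` has `r u < r q ≤ r v`, so every path of `G` from `u` to `v` uses such an
edge and is no stronger than `(p, q)`; hence it is no stronger than the tree path.
-/

attribute [local instance] Classical.propDecidable

open Finset

theorem List.IsChain.and {α : Type*} {R S : α → α → Prop} {l : List α}
    (hR : l.IsChain R) (hS : l.IsChain S) : l.IsChain fun a b => R a b ∧ S a b := by
  rw [List.isChain_iff_forall_rel_of_append_cons_cons] at *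
  exact fun _ _ _ _ h => ⟨hR h, hS h⟩

theorem List.IsChain.induction_head? {α : Type*} {R : α → α → Prop} {l : List α} {a : α}
    (p : α → Prop) (h : l.IsChain R) (ha : l.head? = some a)
    (carries : ∀ ⦃x y⦄, R x y → p x → p y) (initial : p a) : ∀ x ∈ l, p x :=
  h.induction p l carries fun hl => by
    rwa [Option.some_inj.1 ((List.head?_eq_some_head hl).symm.trans ha)]

theorem List.IsChain.backwards_induction_getLast? {α : Type*} {R : α → α → Prop}
    {l : List α} {b : α} (p : α → Prop) (h : l.IsChain R) (hb : l.getLast? = some b)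
    (carries : ∀ ⦃x y⦄, R x y → p y → p x) (final : p b) : ∀ x ∈ l, p x :=
  h.backwards_induction p l carries fun hl => by
    rwa [Option.some_inj.1 ((List.getLast?_eq_some_getLast hl).symm.trans hb)]

section Paths

variable {V : Type*} {E T : Finset (V × V)} {l : List V} {u v : V}

theorem IsPathFrom.ne_nil (h : IsPathFrom E l u v) : l ≠ [] := h.1

theorem IsPathFrom.nodup (h : IsPathFrom E l u v) : l.Nodup := h.2.1

theorem IsPathFrom.head?_eq (h : IsPathFrom E l u v) : l.head? = some u := h.2.2.1

theorem IsPathFrom.getLast?_eq (h : IsPathFrom E l u v) : l.getLast? = some v := h.2.2.2.1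

theorem IsPathFrom.isChain (h : IsPathFrom E l u v) : l.IsChain fun a b => (a, b) ∈ E :=
  h.2.2.2.2

theorem IsPathFrom.singleton_s12 (v : V) : IsPathFrom E [v] v v :=
  ⟨List.cons_ne_nil v [], List.nodup_singleton v, rfl, rfl, List.isChain_singleton v⟩

theorem IsPathFrom.mono_s12 (h : IsPathFrom T l u v) (hTE : T ⊆ E) : IsPathFrom E l u v :=
  ⟨h.ne_nil, h.nodup, h.head?_eq, h.getLast?_eq, h.isChain.imp fun _ _ hab => hTE hab⟩

theorem IsPathFrom.infix {l' : List V} {a b : V} (h : IsPathFrom E l u v) (hl' : l' <:+: l)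
    (ha : l'.head? = some a) (hb : l'.getLast? = some b) : IsPathFrom E l' a b :=
  ⟨fun hnil => by simp [hnil] at ha, h.nodup.sublist hl'.sublist, ha, hb, h.isChain.infix hl'⟩

theorem IsPathFrom.concat {x : V} (h : IsPathFrom E l u x) (hxv : (x, v) ∈ E) (hv : v ∉ l) :
    IsPathFrom E (l ++ [v]) u v := by
  obtain ⟨hne, hnd, hhead, hlast, hchain⟩ := h
  refine ⟨by simp, hnd.append (List.nodup_singleton v) (by simpa using hv),
    by rwa [List.head?_append_of_ne_nil l hne], by simp, ?_⟩
  refine List.isChain_append.2 ⟨hchain, List.isChain_singleton v, ?_⟩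
  simp [hlast, hxv]

theorem IsPathFrom.eq_singleton_or_concat (h : IsPathFrom E l u v) :
    l = [v] ∨ ∃ l₀ x, l = l₀ ++ [v] ∧ (x, v) ∈ E ∧ IsPathFrom E l₀ u x := by
  obtain ⟨hne, hnd, hhead, hlast, hchain⟩ := h
  obtain ⟨l₀, rfl⟩ := List.getLast?_eq_some_iff.1 hlast
  rcases List.eq_nil_or_concat' l₀ with rfl | ⟨l₁, x, rfl⟩
  · exact Or.inl rfl
  obtain ⟨hchain₀, -, hlink⟩ := List.isChain_append.1 hchain
  refine Or.inr ⟨l₁ ++ [x], x, rfl, hlink x (by simp) v rfl, by simp,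
    hnd.sublist (List.sublist_append_left _ _), ?_, by simp, hchain₀⟩
  rwa [List.head?_append_of_ne_nil _ (by simp)] at hhead

theorem IsPathFrom.rank_mem_Icc {r : V → ℕ} (hrank : ∀ f ∈ T, r f.1 < r f.2)
    (h : IsPathFrom T l u v) {x : V} (hx : x ∈ l) : r x ∈ Set.Icc (r u) (r v) :=
  ⟨h.isChain.induction_head? (fun y => r u ≤ r y) h.head?_eq
      (fun _ _ hyz hy => hy.trans (hrank _ hyz).le) le_rfl x hx,
    h.isChain.backwards_induction_getLast? (fun y => r y ≤ r v) h.getLast?_eq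
      (fun _ _ hyz hz => (hrank _ hyz).le.trans hz) le_rfl x hx⟩

theorem IsPathFrom.mem_of_closed {S : Set V} (h : IsPathFrom E l u v) (hu : u ∈ S)
    (hS : ∀ f ∈ E, f.1 ∈ S → f.2 ∈ S) : v ∈ S :=
  h.isChain.induction_head? (· ∈ S) h.head?_eq (fun x y hxy hx => hS (x, y) hxy hx) hu v
    (List.mem_of_getLast? h.getLast?_eq)

end Paths

section RankedTree

variable {V : Type*} {T : Finset (V × V)} {s : V} {r : V → ℕ}

theorem exists_isPathFrom_of_rank (hrank : ∀ f ∈ T, r f.1 < r f.2)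
    (hparent : ∀ v, v ≠ s → ∃ u, (u, v) ∈ T) (v : V) : ∃ l, IsPathFrom T l s v := by
  induction v using (measure r).wf.induction with
  | _ v ih =>
  by_cases hvs : v = s
  · exact ⟨[v], hvs ▸ IsPathFrom.singleton_s12 v⟩
  obtain ⟨u, huv⟩ := hparent v hvs
  obtain ⟨l, hl⟩ := ih u (hrank _ huv)
  refine ⟨l ++ [v], hl.concat huv fun hv => ?_⟩
  exact (hrank _ huv).not_ge (hl.rank_mem_Icc hrank hv).2

theorem isPathFrom_unique_of_rank (hrank : ∀ f ∈ T, r f.1 < r f.2)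
    (hroot : ∀ f ∈ T, f.2 ≠ s) (hinj : ∀ e f, e ∈ T → f ∈ T → e.2 = f.2 → e = f)
    (v : V) {l l' : List V} (hl : IsPathFrom T l s v) (hl' : IsPathFrom T l' s v) : l = l' := by
  induction v using (measure r).wf.induction generalizing l l' with
  | _ v ih =>
  have hsingle {m : List V} (hm : IsPathFrom T m s v) (hmv : m = [v]) : v = s := by
    simpa [hmv] using hm.head?_eq
  rcases hl.eq_singleton_or_concat with h | ⟨l₀, x, rfl, hxv, hl₀⟩ <;>
    rcases hl'.eq_singleton_or_concat with h' | ⟨l₀', x', rfl, hxv', hl₀'⟩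
  · rw [h, h']
  · exact absurd (hsingle hl h) (hroot _ hxv')
  · exact absurd (hsingle hl' h') (hroot _ hxv)
  · obtain rfl : x = x' := congrArg Prod.fst (hinj _ _ hxv hxv' rfl)
    rw [ih x (hrank _ hxv) hl₀ hl₀']

theorem isRootedTree_of_rank (hrank : ∀ f ∈ T, r f.1 < r f.2) (hroot : ∀ f ∈ T, f.2 ≠ s)
    (hinj : ∀ e f, e ∈ T → f ∈ T → e.2 = f.2 → e = f)
    (hparent : ∀ v, v ≠ s → ∃ u, (u, v) ∈ T) : IsRootedTree T s :=
  ⟨fun v => (exists_isPathFrom_of_rank hrank hparent v).elim fun l hl =>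
      ⟨l, hl, fun _ hl' => isPathFrom_unique_of_rank hrank hroot hinj v hl' hl⟩,
    hroot, hinj⟩

end RankedTree

section Strength

variable {V : Type*} {w : V × V → ℕ}

theorem strength_cons_cons (a b : V) (l : List V) :
    strength w (a :: b :: l) = min (w (a, b) : ℕ∞) (strength w (b :: l)) :=
  rfl

theorem le_strength_iff_s12 {c : ℕ∞} :
    ∀ {l : List V}, c ≤ strength w l ↔ l.IsChain fun a b => c ≤ w (a, b)
  | [] | [_] => by simp [strength]
  | a :: b :: l => by
    rw [strength_cons_cons, le_min_iff, le_strength_iff_s12, List.isChain_cons_cons]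

theorem isStrongestPath_of_cut {E T : Finset (V × V)} {r : V → ℕ} (hTE : T ⊆ E)
    (hrank : ∀ f ∈ T, r f.1 < r f.2)
    (hcut : ∀ f ∈ T, ∀ g ∈ E, r g.1 < r f.2 → r f.2 ≤ r g.2 → w g ≤ w f)
    {l : List V} {u v : V} (hl : IsPathFrom T l u v) : IsStrongestPath E w l u v := by
  refine ⟨hl.mono_s12 hTE, fun l' hl' => ?_⟩
  rw [le_strength_iff_s12, List.isChain_iff_forall_rel_of_append_cons_cons]
  intro p q l₁ l₂ hsplit
  have hpq : (p, q) ∈ T := List.isChain_iff_forall_rel_of_append_cons_cons.1 hl.isChain hsplit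
  have hu : r u < r q :=
    (hl.rank_mem_Icc hrank (by simp [hsplit])).1.trans_lt (hrank _ hpq)
  have hv : r q ≤ r v := (hl.rank_mem_Icc hrank (x := q) (by simp [hsplit])).2
  by_contra! hweak
  have hheavy : l'.IsChain fun x y => (x, y) ∈ E ∧ strength w l' ≤ w (x, y) :=
    hl'.isChain.and (le_strength_iff_s12.1 le_rfl)
  have hbelow : ∀ x ∈ l', r x < r q :=
    hheavy.induction_head? _ hl'.head?_eq (fun x y ⟨hxy, hw⟩ hx => by
      by_contra! hy
      exact (hw.trans (by exact_mod_cast hcut _ hpq _ hxy hx hy)).not_gt hweak) hu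
  exact (hbelow v (List.mem_of_getLast? hl'.getLast?_eq)).not_ge hv

end Strength

section Prim

variable {V β : Type*} [LinearOrder β] {E : Finset (V × V)} {w : V × V → β} {s : V}

/-- `r x` is the step at which `x` was explored, so `weight_le` records Prim's choice of a
heaviest edge leaving the set explored before `f.2`. -/
structure PrimInvariant (E : Finset (V × V)) (w : V × V → β) (s : V) (S : Finset V)
    (T : Finset (V × V)) (r : V → ℕ) : Prop where
  subset : T ⊆ E
  root_mem : s ∈ S
  mem_iff : ∀ x, x ∈ S ↔ r x < #S
  snd_mem : ∀ f ∈ T, f.2 ∈ S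
  snd_ne_root : ∀ f ∈ T, f.2 ≠ s
  inj_snd : ∀ e f, e ∈ T → f ∈ T → e.2 = f.2 → e = f
  exists_parent : ∀ v ∈ S, v ≠ s → ∃ u, (u, v) ∈ T
  rank_lt : ∀ f ∈ T, r f.1 < r f.2
  weight_le : ∀ f ∈ T, ∀ g ∈ E, r g.1 < r f.2 → r f.2 ≤ r g.2 → w g ≤ w f

theorem primInvariant_init : PrimInvariant E w s {s} ∅ fun x => if x = s then 0 else 1 := by
  constructor <;> simp

noncomputable def nextRank (S : Finset V) (r : V → ℕ) (y x : V) : ℕ :=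
  if x ∈ S then r x else if x = y then #S else #S + 1

section NextRank

variable {S : Finset V} {r : V → ℕ} {x y : V}

theorem nextRank_of_mem (hx : x ∈ S) : nextRank S r y x = r x :=
  if_pos hx

theorem nextRank_self (hy : y ∉ S) : nextRank S r y y = #S := by
  simp [nextRank, hy]

theorem nextRank_lt_card_iff (hS : ∀ x, x ∈ S ↔ r x < #S) :
    nextRank S r y x < #S ↔ x ∈ S := by
  by_cases hx : x ∈ S
  · simp [nextRank_of_mem hx, hx, (hS x).1 hx]
  · simp only [nextRank, hx, if_false, iff_false]
    split_ifs <;> omega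

theorem mem_insert_iff_nextRank_lt (hS : ∀ x, x ∈ S ↔ r x < #S) (hy : y ∉ S) :
    x ∈ insert y S ↔ nextRank S r y x < #(insert y S) := by
  rw [card_insert_of_notMem hy, mem_insert, Nat.lt_succ_iff, le_iff_lt_or_eq,
    nextRank_lt_card_iff hS, or_comm]
  by_cases hx : x ∈ S
  · simp [hx]
  · by_cases hxy : x = y
    · subst hxy
      simp [nextRank, hx]
    · simp [nextRank, hx, hxy]

end NextRank

theorem PrimInvariant.step {S : Finset V} {T : Finset (V × V)} {r : V → ℕ}
    (hinv : PrimInvariant E w s S T r) {e : V × V} (he : e ∈ E) (h1 : e.1 ∈ S) (h2 : e.2 ∉ S)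
    (hmax : ∀ f ∈ E, f.1 ∈ S → f.2 ∉ S → w f ≤ w e) :
    PrimInvariant E w s (insert e.2 S) (insert e T) (nextRank S r e.2) := by
  have hlt {x} : nextRank S r e.2 x < #S ↔ x ∈ S := nextRank_lt_card_iff hinv.mem_iff
  have hfst {f} (hf : f ∈ T) : f.1 ∈ S :=
    (hinv.mem_iff _).2 ((hinv.rank_lt f hf).trans ((hinv.mem_iff _).1 (hinv.snd_mem f hf)))
  have hnew {f} (hf : f ∈ T) : e.2 ≠ f.2 := fun h => h2 (h ▸ hinv.snd_mem f hf)
  refine ⟨insert_subset he hinv.subset, mem_insert_of_mem hinv.root_mem,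
    fun x => mem_insert_iff_nextRank_lt hinv.mem_iff h2, ?_, ?_, ?_, ?_, ?_, ?_⟩
    <;> simp only [mem_insert, forall_eq_or_imp]
  · exact ⟨by simp, fun f hf => Or.inr (hinv.snd_mem f hf)⟩
  · exact ⟨fun h => h2 (h ▸ hinv.root_mem), hinv.snd_ne_root⟩
  · rintro f g (rfl | hf) (rfl | hg) hfg
    · rfl
    · exact absurd hfg (hnew hg)
    · exact absurd hfg.symm (hnew hf)
    · exact hinv.inj_snd f g hf hg hfg
  · refine ⟨fun _ => ⟨e.1, Or.inl rfl⟩, fun v hv hvs => ?_⟩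
    obtain ⟨u, hu⟩ := hinv.exists_parent v hv hvs
    exact ⟨u, Or.inr hu⟩
  · refine ⟨?_, fun f hf => ?_⟩
    · rw [nextRank_of_mem h1, nextRank_self h2]
      exact (hinv.mem_iff _).1 h1
    · rw [nextRank_of_mem (hfst hf), nextRank_of_mem (hinv.snd_mem f hf)]
      exact hinv.rank_lt f hf
  · rw [nextRank_self h2]
    refine ⟨fun g hg hg1 hg2 => hmax g hg (hlt.1 hg1) fun hg2S => (hlt.2 hg2S).not_ge hg2,
      fun f hf g hg hg1 hg2 => ?_⟩
    have hf2 := hinv.snd_mem f hf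
    rw [nextRank_of_mem hf2] at hg1 hg2
    have hg1S : g.1 ∈ S := hlt.1 (hg1.trans ((hinv.mem_iff _).1 hf2))
    rw [nextRank_of_mem hg1S] at hg1
    refine hinv.weight_le f hf g hg hg1 ?_
    by_cases hg2S : g.2 ∈ S
    · rwa [nextRank_of_mem hg2S] at hg2
    · exact ((hinv.mem_iff _).1 hf2).le.trans (not_lt.1 ((hinv.mem_iff _).not.1 hg2S))

theorem PrimRun.exists_primInvariant {S : Finset V} {T : Finset (V × V)}
    (h : PrimRun E w s S T) : ∃ r, PrimInvariant E w s S T r := by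
  induction h with
  | init => exact ⟨_, primInvariant_init⟩
  | step e he h1 h2 hmax _ ih =>
    obtain ⟨r, hinv⟩ := ih
    exact ⟨_, hinv.step he h1 h2 hmax⟩

theorem PrimRun.exists_isPrimOutput [Fintype V] {S : Finset V} {T : Finset (V × V)}
    (h : PrimRun E w s S T) : ∃ T', IsPrimOutput E w s T' := by
  by_cases hcross : ∃ f ∈ E, f.1 ∈ S ∧ f.2 ∉ S
  · obtain ⟨e, he, hmax⟩ := exists_max_image (E.filter fun f => f.1 ∈ S ∧ f.2 ∉ S) w
      (hcross.imp fun f ⟨hf, hf'⟩ => mem_filter.2 ⟨hf, hf'⟩)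
    obtain ⟨he, h1, h2⟩ := mem_filter.1 he
    have hmax' : ∀ f ∈ E, f.1 ∈ S → f.2 ∉ S → w f ≤ w e :=
      fun f hf hf1 hf2 => hmax f (mem_filter.2 ⟨hf, hf1, hf2⟩)
    exact (h.step e he h1 h2 hmax').exists_isPrimOutput
  · push Not at hcross
    exact ⟨T, S, h, hcross⟩
termination_by #Sᶜ
decreasing_by exact card_lt_card (compl_ssubset_compl.2 (ssubset_insert h2))

end Prim

/-- Let `G = (V, E)` be a finite weighted directed graph with weight
function `w : E → ℕ` and let `s` have a path in `G` to every vertex. Then there exists a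
rooted tree `T` on `V` with root `s` and `E(T) ⊆ E` such that every tree path is a
recursive strongest path in `G` (every contiguous subpath of it is a strongest path in
`G`). -/
theorem exists_recursively_strongest_path_tree
    {V : Type*} [Fintype V] (E : Finset (V × V)) (w : V × V → ℕ) (s : V)
    (hreach : ∀ v : V, Reach E s v) :
    ∃ T : Finset (V × V), T ⊆ E ∧ IsRootedTree T s ∧
      ∀ (u v : V) (l : List V), IsPathFrom T l u v →
        ∀ (l₁ l₂ l₃ : List V) (a b : V), l = l₁ ++ l₂ ++ l₃ →
          l₂.head? = some a → l₂.getLast? = some b → IsStrongestPath E w l₂ a b := by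
  obtain ⟨T, S, hrun, hclosed⟩ := (PrimRun.init (E := E) (w := w) (s := s)).exists_isPrimOutput
  obtain ⟨r, hinv⟩ := hrun.exists_primInvariant
  have hS (v : V) : v ∈ S :=
    (hreach v).elim fun _ hl => hl.mem_of_closed (S := ↑S) hinv.root_mem hclosed
  refine ⟨T, hinv.subset, isRootedTree_of_rank hinv.rank_lt hinv.snd_ne_root hinv.inj_snd
    fun v => hinv.exists_parent v (hS v), ?_⟩
  intro u v l hl l₁ l₂ l₃ a b hsplit ha hb
  exact isStrongestPath_of_cut hinv.subset hinv.rank_lt hinv.weight_le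
    (hl.infix ⟨l₁, l₃, hsplit.symm⟩ ha hb)
end
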